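/- arXiv:2401.10546 — 6 statements merged into one kernel-verified Lean document; each statement's English description precedes it below -/
import Mathlib

section
/- There exists θ₀ ∈ (π/2, π) such that for every θ ∈ (π/2, θ₀) there are constants c₁, c₂ > 0, independent of τ and z, with the property: for every time step τ > 0 and every z ∈ D(τ,θ) one has c₁|z| ≤ |δ_τ(e^{−zτ})| ≤ c₂|z|, where δ_τ is the BDF2 generating symbol. -/
/-!
With `w = zτ` one has `δ_τ(e^{-zτ}) = τ⁻¹ F(w)` for `F(w) = (e^{-w} - 1)(e^{-w} - 3)/2`, and
`zτ ∈ D(1,θ)`, so the bound is scale invariant and reduces to `τ = 1`. On `D(1,θ)` we have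
`‖w‖ ≤ max 1 (π / sin θ)` and `Re w ≥ ‖w‖ cos θ`, so for `θ` close to `π/2` it lies in the
compact set `K = {‖w‖ ≤ 4, Re w ≥ -1/2}`. There `F` vanishes only at `0` (`e^{-w} = 1` forces
`w ∈ 2πiℤ`, and `e^{-w} = 3` forces `Re w = -log 3`), and that zero is simple (`F'(0) = 1`), so
the continuous function `F(w)/w` is bounded above and away from zero on `K`.
-/

open Complex Set

/-- The BDF2 generating symbol `δ_τ(ξ) = τ⁻¹(3/2 − 2ξ + ξ²/2)`. -/
noncomputable def bdf2 (τ : ℝ) (ξ : ℂ) : ℂ :=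
  (τ : ℂ)⁻¹ * (3 / 2 - 2 * ξ + ξ ^ 2 / 2)

/-- The region `D(τ,θ)`: nonzero `z` with either `|arg z| = θ` and `|Im z| ≤ π/τ`,
or `|z| ≤ 1/τ` and `|arg z| ≤ θ`. -/
def Dset (τ θ : ℝ) : Set ℂ :=
  {z : ℂ | z ≠ 0 ∧
    ((|z.arg| = θ ∧ |z.im| ≤ Real.pi / τ) ∨ (‖z‖ ≤ 1 / τ ∧ |z.arg| ≤ θ))}

theorem exists_mul_norm_le_norm_le_mul_norm {𝕜 E : Type*} [NontriviallyNormedField 𝕜]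
    [NormedAddCommGroup E] [NormedSpace 𝕜 E] {f : 𝕜 → E} (hf : Differentiable 𝕜 f)
    (hf0 : f 0 = 0) (hf' : deriv f 0 ≠ 0) {K : Set 𝕜} (hK : IsCompact K)
    (hK0 : ∀ w ∈ K, w ≠ 0 → f w ≠ 0) :
    ∃ c₁ > (0 : ℝ), ∃ c₂ > (0 : ℝ), ∀ w ∈ K, c₁ * ‖w‖ ≤ ‖f w‖ ∧ ‖f w‖ ≤ c₂ * ‖w‖ := by
  have hg : Continuous (dslope f 0) := continuousOn_univ.1 <|
    (continuousOn_dslope Filter.univ_mem).2 ⟨hf.continuous.continuousOn, hf 0⟩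
  have hgK : ∀ w ∈ K, dslope f 0 w ≠ 0 := by
    intro w hw
    rcases eq_or_ne w 0 with rfl | hw0
    · rwa [dslope_same]
    · rw [dslope_of_ne f hw0, slope_def_module, hf0, sub_zero, sub_zero]
      exact smul_ne_zero (inv_ne_zero hw0) (hK0 w hw hw0)
  have hfg (w : 𝕜) : ‖f w‖ = ‖dslope f 0 w‖ * ‖w‖ := by
    rw [← sub_zero (f w), ← hf0, ← sub_smul_dslope, sub_zero, norm_smul, mul_comm]
  obtain ⟨C, hC⟩ := hK.exists_bound_of_continuousOn hg.norm.continuousOn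
  obtain ⟨D, hD⟩ := hK.exists_bound_of_continuousOn <|
    hg.norm.continuousOn.inv₀ fun w hw => norm_ne_zero_iff.2 (hgK w hw)
  refine ⟨(max D 1)⁻¹, by positivity, max C 1, by positivity, fun w hw => ⟨?_, ?_⟩⟩
  · have hgw : 0 < ‖dslope f 0 w‖ := norm_pos_iff.2 (hgK w hw)
    have hgw_inv : ‖dslope f 0 w‖⁻¹ ≤ max D 1 :=
      (le_abs_self _).trans ((hD w hw).trans (le_max_left _ _))
    rw [hfg]
    gcongr
    exact inv_le_of_inv_le₀ hgw hgw_inv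
  · rw [hfg]
    gcongr
    exact (le_abs_self _).trans ((hC w hw).trans (le_max_left _ _))

theorem Complex.cos_mul_norm_le_re {θ : ℝ} {w : ℂ} (harg : |w.arg| ≤ θ) (hθ : θ ≤ Real.pi) :
    Real.cos θ * ‖w‖ ≤ w.re := by
  rw [← norm_mul_cos_arg, mul_comm, ← Real.cos_abs w.arg]
  gcongr
  exact Real.cos_le_cos_of_nonneg_of_le_pi (abs_nonneg _) hθ harg

theorem Complex.norm_mul_sin_abs_arg (w : ℂ) : ‖w‖ * Real.sin |w.arg| = |w.im| := by
  rw [← Real.abs_sin_eq_sin_abs_of_abs_le_pi (abs_arg_le_pi w), ← abs_norm, ← abs_mul,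
    norm_mul_sin_arg]

theorem mul_ofReal_mem_Dset_one {τ θ : ℝ} {z : ℂ} (hτ : 0 < τ) (hz : z ∈ Dset τ θ) :
    z * τ ∈ Dset 1 θ := by
  obtain ⟨hz0, hz⟩ := hz
  have him : |(z * τ).im| = |z.im| * τ := by
    rw [mul_im, ofReal_re, ofReal_im, mul_zero, zero_add, abs_mul, abs_of_pos hτ]
  have hnorm : ‖z * τ‖ = ‖z‖ * τ := by rw [norm_mul, norm_real, Real.norm_of_nonneg hτ.le]
  refine ⟨mul_ne_zero hz0 (ofReal_ne_zero.2 hτ.ne'), ?_⟩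
  rw [arg_mul_real hτ, him, hnorm, div_one, div_one]
  rcases hz with ⟨harg, hle⟩ | ⟨hle, harg⟩
  · exact Or.inl ⟨harg, (le_div_iff₀ hτ).1 hle⟩
  · exact Or.inr ⟨(le_div_iff₀ hτ).1 hle, harg⟩

theorem Dset_one_subset {θ : ℝ} (hθ : θ ≤ Real.pi) (hsin : Real.pi / 4 ≤ Real.sin θ)
    (hcos : -(1 / 8) ≤ Real.cos θ) :
    Dset 1 θ ⊆ Metric.closedBall 0 4 ∩ {w | -(1 / 2) ≤ w.re} := by
  rintro w ⟨-, hw⟩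
  have hnorm : ‖w‖ ≤ 4 := by
    rcases hw with ⟨harg, him⟩ | ⟨hle, -⟩
    · rw [← norm_mul_sin_abs_arg, harg, div_one] at him
      nlinarith [norm_nonneg w, Real.pi_pos]
    · linarith
  have harg : |w.arg| ≤ θ := by
    rcases hw with ⟨harg, -⟩ | ⟨-, harg⟩
    exacts [harg.le, harg]
  refine ⟨mem_closedBall_zero_iff.2 hnorm, show -(1 / 2) ≤ w.re from ?_⟩
  nlinarith [cos_mul_norm_le_re harg hθ, norm_nonneg w]

theorem sin_cos_bounds_near_pi_div_two {θ : ℝ}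
    (hθ : θ ∈ Ioo (Real.pi / 2) (Real.pi / 2 + 1 / 10)) :
    θ ≤ Real.pi ∧ Real.pi / 4 ≤ Real.sin θ ∧ -(1 / 8) ≤ Real.cos θ := by
  obtain ⟨x, hx0, hx1, rfl⟩ : ∃ x, 0 < x ∧ x < 1 / 10 ∧ θ = x + Real.pi / 2 :=
    ⟨θ - Real.pi / 2, by linarith [hθ.1], by linarith [hθ.2], by ring⟩
  rw [Real.sin_add_pi_div_two, Real.cos_add_pi_div_two]
  refine ⟨by linarith [Real.pi_gt_three], ?_, ?_⟩
  · nlinarith [Real.one_sub_sq_div_two_le_cos (x := x), Real.pi_lt_d2]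
  · linarith [Real.sin_le hx0.le]

theorem bdf2_eq_inv_mul_bdf2_one (τ : ℝ) (ξ : ℂ) : bdf2 τ ξ = (τ : ℂ)⁻¹ * bdf2 1 ξ := by
  simp only [bdf2, ofReal_one, inv_one, one_mul]

theorem bdf2_one_eq (ξ : ℂ) : bdf2 1 ξ = (ξ - 1) * (ξ - 3) / 2 := by
  simp only [bdf2, ofReal_one, inv_one, one_mul]; ring

theorem differentiable_bdf2_one_exp_neg : Differentiable ℂ fun w => bdf2 1 (exp (-w)) := by
  simp only [bdf2]; fun_prop

theorem hasDerivAt_bdf2_one (ξ : ℂ) : HasDerivAt (bdf2 1) (ξ - 2) ξ := by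
  rw [funext bdf2_one_eq]
  exact ((((hasDerivAt_id ξ).sub_const 1).mul ((hasDerivAt_id ξ).sub_const 3)).div_const 2)
    |>.congr_deriv (by simp only [id]; ring)

theorem hasDerivAt_bdf2_one_exp_neg_zero : HasDerivAt (fun w => bdf2 1 (exp (-w))) 1 0 :=
  ((hasDerivAt_bdf2_one _).comp 0 (hasDerivAt_neg (0 : ℂ)).cexp).congr_deriv (by norm_num)

theorem bdf2_one_exp_neg_ne_zero {w : ℂ} (hw0 : w ≠ 0) (hw : ‖w‖ < 2 * Real.pi)
    (hre : -Real.log 3 < w.re) : bdf2 1 (exp (-w)) ≠ 0 := by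
  rw [bdf2_one_eq, div_ne_zero_iff, mul_ne_zero_iff, sub_ne_zero, sub_ne_zero]
  refine ⟨⟨fun h => ?_, fun h => ?_⟩, two_ne_zero⟩
  · obtain ⟨n, hn⟩ := exp_eq_one_iff.1 h
    have hn0 : n ≠ 0 := by rintro rfl; simp [hw0] at hn
    have : 2 * Real.pi * |(n : ℝ)| = ‖w‖ := by
      rw [← norm_neg w, hn]
      simp only [norm_mul, norm_intCast, norm_ofNat, norm_real, Real.norm_eq_abs,
        abs_of_pos Real.pi_pos, norm_I, mul_one]
      ring
    nlinarith [(by exact_mod_cast Int.one_le_abs hn0 : (1 : ℝ) ≤ |(n : ℝ)|), Real.pi_pos]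
  · have := congrArg norm h
    rw [norm_exp, neg_re, norm_ofNat, ← Real.exp_log three_pos] at this
    linarith [Real.exp_injective this]

theorem exists_bounds_bdf2_one_exp_neg :
    ∃ c₁ > (0 : ℝ), ∃ c₂ > (0 : ℝ), ∀ w ∈ Metric.closedBall 0 4 ∩ {w : ℂ | -(1 / 2) ≤ w.re},
      c₁ * ‖w‖ ≤ ‖bdf2 1 (exp (-w))‖ ∧ ‖bdf2 1 (exp (-w))‖ ≤ c₂ * ‖w‖ := by
  refine exists_mul_norm_le_norm_le_mul_norm differentiable_bdf2_one_exp_neg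
    (by simp [bdf2_one_eq]) (by simp [hasDerivAt_bdf2_one_exp_neg_zero.deriv])
    ((isCompact_closedBall 0 4).inter_right (isClosed_le continuous_const continuous_re))
    fun w ⟨hw4, hre⟩ hw0 => bdf2_one_exp_neg_ne_zero hw0 ?_ ?_
  · linarith [mem_closedBall_zero_iff.1 hw4, Real.pi_gt_three]
  · have : 1 < Real.log 3 := (Real.lt_log_iff_exp_lt three_pos).2 Real.exp_one_lt_three
    linarith [show -(1 / 2) ≤ w.re from hre]

theorem bdf2_symbol_two_sided_bound :
    ∃ θ₀ ∈ Ioo (Real.pi / 2) Real.pi, ∀ θ ∈ Ioo (Real.pi / 2) θ₀,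
      ∃ c₁ > (0 : ℝ), ∃ c₂ > (0 : ℝ),
        ∀ τ : ℝ, 0 < τ → ∀ z ∈ Dset τ θ,
          c₁ * ‖z‖ ≤ ‖bdf2 τ (Complex.exp (-z * τ))‖ ∧
          ‖bdf2 τ (Complex.exp (-z * τ))‖ ≤ c₂ * ‖z‖ := by
  refine ⟨Real.pi / 2 + 1 / 10, ⟨by linarith, by linarith [Real.pi_gt_three]⟩, fun θ hθ => ?_⟩
  obtain ⟨hθπ, hsin, hcos⟩ := sin_cos_bounds_near_pi_div_two hθ
  obtain ⟨c₁, hc₁, c₂, hc₂, hbound⟩ := exists_bounds_bdf2_one_exp_neg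
  refine ⟨c₁, hc₁, c₂, hc₂, fun τ hτ z hz => ?_⟩
  obtain ⟨hlow, hupp⟩ := hbound _ (Dset_one_subset hθπ hsin hcos (mul_ofReal_mem_Dset_one hτ hz))
  have hsymb : ‖bdf2 τ (exp (-z * τ))‖ = ‖bdf2 1 (exp (-(z * τ)))‖ / τ := by
    rw [bdf2_eq_inv_mul_bdf2_one, norm_mul, norm_inv, norm_real, Real.norm_of_nonneg hτ.le,
      neg_mul, inv_mul_eq_div]
  have hz : ‖z‖ = ‖z * τ‖ / τ := by
    rw [norm_mul, norm_real, Real.norm_of_nonneg hτ.le, mul_div_cancel_right₀ _ hτ.ne']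
  rw [hsymb, hz, ← mul_div_assoc, ← mul_div_assoc]
  exact ⟨by gcongr, by gcongr⟩
end

section
/- There exists θ₀ ∈ (π/2, π) such that for every θ ∈ (π/2, θ₀) there is a constant c > 0, independent of τ and z, with the property: for every time step τ > 0 and every z ∈ D(τ,θ) one has |δ_τ(e^{−zτ}) − z| ≤ c τ² |z|³, where δ_τ is the BDF2 generating symbol. -/
/-! With `w = zτ` one has `δ_τ(e^{-zτ}) - z = τ⁻¹ f(w)`, where
`f(w) = 3/2 - 2e^{-w} + e^{-2w}/2 - w`, so it suffices to bound `|f(w)| ≤ c|w|³` on the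
rescaled region. For `|w| ≤ 1` this is Taylor's theorem: the quadratic Taylor polynomials of
`e^{-w}` and `e^{-2w}` cancel in `f`. Otherwise `z` lies on a ray `|arg z| = θ` with
`|Im w| ≤ π`, and `θ - π/2 ≤ arctan (1/π)` forces `Re w ≥ -1`; then `e^{-w}` is bounded and
`|f(w)| = O(|w|) = O(|w|³)`. -/

open Complex Set

noncomputable def bdf2Defect (w : ℂ) : ℂ :=
  3 / 2 - 2 * exp (-w) + exp (-w) ^ 2 / 2 - w

lemma bdf2_exp_sub_eq {τ : ℝ} (hτ : τ ≠ 0) (z : ℂ) :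
    bdf2 τ (exp (-z * τ)) - z = (τ : ℂ)⁻¹ * bdf2Defect (z * τ) := by
  have hτ' : (τ : ℂ) ≠ 0 := by exact_mod_cast hτ
  rw [bdf2, bdf2Defect, neg_mul]
  field_simp

lemma norm_bdf2Defect_le_of_norm_le_one {w : ℂ} (hw : ‖w‖ ≤ 1) :
    ‖bdf2Defect w‖ ≤ 2 * ‖w‖ ^ 3 := by
  have h₁ := exp_bound' (x := -w) (n := 3) (by norm_num; linarith)
  have h₂ := exp_bound' (x := 2 * -w) (n := 3) (by norm_num; linarith)
  have hdefect : bdf2Defect w =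
      -2 * (exp (-w) - ∑ m ∈ Finset.range 3, (-w) ^ m / m.factorial) +
        (exp (2 * -w) - ∑ m ∈ Finset.range 3, (2 * -w) ^ m / m.factorial) / 2 := by
    rw [bdf2Defect, two_mul (-w), exp_add, ← sq]
    simp only [Finset.sum_range_succ, Finset.sum_range_zero]
    norm_num [Nat.factorial]
    ring
  rw [hdefect]
  calc _ ≤ 2 * ‖exp (-w) - ∑ m ∈ Finset.range 3, (-w) ^ m / m.factorial‖ +
        ‖exp (2 * -w) - ∑ m ∈ Finset.range 3, (2 * -w) ^ m / m.factorial‖ / 2 := by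
        refine (norm_add_le _ _).trans_eq ?_
        simp
    _ ≤ 2 * (‖-w‖ ^ 3 / (3 : ℕ).factorial * 2) + ‖2 * -w‖ ^ 3 / (3 : ℕ).factorial * 2 / 2 := by
        gcongr
    _ = 2 * ‖w‖ ^ 3 := by
        norm_num [norm_mul, Nat.factorial]
        ring

lemma norm_bdf2Defect_le_of_one_le_norm {w : ℂ} (hw : 1 ≤ ‖w‖) (hre : -1 ≤ w.re) :
    ‖bdf2Defect w‖ ≤ 13 * ‖w‖ ^ 3 := by
  have hexp : ‖exp (-w)‖ ≤ 3 := by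
    rw [norm_exp, neg_re]
    calc Real.exp (-w.re) ≤ Real.exp 1 := Real.exp_le_exp.mpr (by linarith)
      _ ≤ 3 := Real.exp_one_lt_d9.le.trans (by norm_num)
  calc ‖bdf2Defect w‖ ≤ 3 / 2 + 2 * ‖exp (-w)‖ + ‖exp (-w)‖ ^ 2 / 2 + ‖w‖ := by
        refine (norm_sub_le _ _).trans (add_le_add_left ((norm_add_le _ _).trans
          (add_le_add ((norm_sub_le _ _).trans_eq ?_) ?_)) _)
        · norm_num [norm_mul]
        · simp [norm_pow]
    _ ≤ 12 * ‖w‖ ^ 3 + ‖w‖ ^ 3 := by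
        gcongr
        · nlinarith [one_le_pow₀ (n := 3) hw, norm_nonneg (exp (-w))]
        · exact le_self_pow₀ hw (by norm_num)
    _ = 13 * ‖w‖ ^ 3 := by ring

lemma norm_bdf2Defect_le {w : ℂ} (hw : ‖w‖ ≤ 1 ∨ -1 ≤ w.re) :
    ‖bdf2Defect w‖ ≤ 13 * ‖w‖ ^ 3 := by
  rcases le_or_gt ‖w‖ 1 with hsmall | hlarge
  · exact (norm_bdf2Defect_le_of_norm_le_one hsmall).trans (by gcongr; norm_num)
  · exact norm_bdf2Defect_le_of_one_le_norm hlarge.le (hw.resolve_left hlarge.not_ge)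

lemma neg_pi_mul_cos_le_sin {α : ℝ} (h₀ : 0 ≤ α)
    (h : α ≤ Real.pi / 2 + Real.arctan Real.pi⁻¹) :
    -(Real.pi * Real.cos α) ≤ Real.sin α := by
  have hπ := Real.pi_pos
  rcases le_or_gt α (Real.pi / 2) with hle | hgt
  · have hcos := Real.cos_nonneg_of_neg_pi_div_two_le_of_le (by linarith) hle
    have hsin := Real.sin_nonneg_of_nonneg_of_le_pi h₀ (by linarith)
    nlinarith
  · obtain ⟨t, rfl⟩ : ∃ t, α = t + Real.pi / 2 := ⟨α - Real.pi / 2, by ring⟩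
    have ht : t < Real.pi / 2 := by linarith [Real.arctan_lt_pi_div_two Real.pi⁻¹]
    have hcos : 0 < Real.cos t := Real.cos_pos_of_mem_Ioo ⟨by linarith, ht⟩
    have htan : Real.tan t ≤ Real.pi⁻¹ := by
      rw [← Real.arctan_tan (by linarith) ht] at h
      exact Real.arctan_strictMono.le_iff_le.mp (by linarith)
    rw [Real.tan_eq_sin_div_cos, div_le_iff₀ hcos] at htan
    rw [Real.cos_add_pi_div_two, Real.sin_add_pi_div_two, mul_neg, neg_neg]
    calc Real.pi * Real.sin t ≤ Real.pi * (Real.pi⁻¹ * Real.cos t) := by gcongr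
      _ = Real.cos t := by field_simp

lemma pi_mul_neg_re_le_abs_im {z : ℂ} (h : |z.arg| ≤ Real.pi / 2 + Real.arctan Real.pi⁻¹) :
    Real.pi * -z.re ≤ |z.im| := by
  have hre : z.re = ‖z‖ * Real.cos |z.arg| := by rw [Real.cos_abs, norm_mul_cos_arg]
  have him : |z.im| = ‖z‖ * Real.sin |z.arg| := by
    rw [← norm_mul_sin_arg, abs_mul, abs_norm,
      Real.abs_sin_eq_sin_abs_of_abs_le_pi (abs_arg_le_pi z)]
  rw [hre, him]
  have := mul_le_mul_of_nonneg_left (neg_pi_mul_cos_le_sin (abs_nonneg _) h) (norm_nonneg z)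
  linarith

lemma norm_mul_le_one_or_neg_one_le_re_of_mem_Dset {τ θ : ℝ} (hτ : 0 < τ)
    (hθ : θ ≤ Real.pi / 2 + Real.arctan Real.pi⁻¹) {z : ℂ} (hz : z ∈ Dset τ θ) :
    ‖z * τ‖ ≤ 1 ∨ -1 ≤ (z * τ).re := by
  rw [norm_mul, norm_real, Real.norm_of_nonneg hτ.le, re_mul_ofReal]
  rcases hz.2 with ⟨harg, him⟩ | ⟨hnorm, -⟩
  · right
    have hre := pi_mul_neg_re_le_abs_im (harg.trans_le hθ)
    rw [le_div_iff₀ hτ] at him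
    nlinarith [Real.pi_pos]
  · left
    rwa [le_div_iff₀ hτ] at hnorm

theorem bdf2_symbol_consistency :
    ∃ θ₀ ∈ Ioo (Real.pi / 2) Real.pi, ∀ θ ∈ Ioo (Real.pi / 2) θ₀,
      ∃ c > (0 : ℝ),
        ∀ τ : ℝ, 0 < τ → ∀ z ∈ Dset τ θ,
          ‖bdf2 τ (Complex.exp (-z * τ)) - z‖ ≤
            c * τ ^ 2 * ‖z‖ ^ 3 := by
  refine ⟨Real.pi / 2 + Real.arctan Real.pi⁻¹, ⟨?_, ?_⟩, fun θ hθ ↦ ⟨13, by norm_num, ?_⟩⟩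
  · linarith [Real.arctan_pos.mpr (inv_pos.mpr Real.pi_pos)]
  · linarith [Real.arctan_lt_pi_div_two Real.pi⁻¹]
  intro τ hτ z hz
  have hdefect :=
    norm_bdf2Defect_le (norm_mul_le_one_or_neg_one_le_re_of_mem_Dset hτ hθ.2.le hz)
  rw [bdf2_exp_sub_eq hτ.ne', norm_mul, norm_inv, norm_real, Real.norm_of_nonneg hτ.le]
  calc τ⁻¹ * ‖bdf2Defect (z * τ)‖ ≤ τ⁻¹ * (13 * ‖z * τ‖ ^ 3) := by gcongr
    _ = 13 * τ ^ 2 * ‖z‖ ^ 3 := by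
      rw [norm_mul, norm_real, Real.norm_of_nonneg hτ.le]
      field_simp
end

section
/- Let α ∈ (1, 2). There exists θ₀ ∈ (π/2, π) such that for every θ ∈ (π/2, θ₀) there is a constant c > 0, independent of τ and z, with the property: for every time step τ > 0 and every z ∈ D(τ,θ) one has δ_τ(e^{−zτ}) ≠ 0 and |δ_τ(e^{−zτ})^α − z^α| ≤ c τ² |z|^{2+α}, where δ_τ is the BDF2 generating symbol and powers are principal complex powers. -/
/-!
Put `w = τz` and `F(w) = δ₁(e^{-w})`. Then `δ_τ(e^{-zτ}) = τ⁻¹ F(w)`, and principal powers commute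
with the positive factor `τ⁻¹`, so the estimate is homogeneous and reduces to `τ = 1`.
For `θ < θ₀ = 5π/6` the set `D(1,θ)` lies in the disc `|w| ≤ 2π`.
Near `0`, `F(w) = w(1 + h)` with `|h| ≤ (4/3)|w|²` by Taylor expansion; as `|arg(1 + h)| ≤ π/6`
and `|arg w| < 5π/6`, the arguments add without wrapping around, so `F(w)^α = w^α (1 + h)^α`
and `|F(w)^α - w^α| ≤ 3α|h||w|^α ≤ 8|w|^{2+α}`. For `1/2 < |w| ≤ 2π` both powers are simply bounded.
Finally `2F(w) = (e^{-w} - 1)(e^{-w} - 3)`, whose only zeros with `|Im w| ≤ π` are `0` and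
`-log 3`, and `D(1,θ)` contains neither.
-/

open Complex Set

open scoped Real

namespace Complex

lemma mul_cpow_of_arg_add_mem {x y : ℂ} (hx : x ≠ 0) (hy : y ≠ 0)
    (harg : arg x + arg y ∈ Ioc (-π) π) (s : ℂ) : (x * y) ^ s = x ^ s * y ^ s := by
  rw [cpow_def_of_ne_zero (mul_ne_zero hx hy), cpow_def_of_ne_zero hx, cpow_def_of_ne_zero hy,
    (log_mul_eq_add_log_iff hx hy).mpr harg, add_mul, exp_add]

lemma ofReal_mul_cpow {r : ℝ} (hr : 0 < r) {x : ℂ} (hx : x ≠ 0) (s : ℂ) :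
    ((r : ℂ) * x) ^ s = (r : ℂ) ^ s * x ^ s :=
  mul_cpow_of_arg_add_mem (ofReal_ne_zero.mpr hr.ne') hx
    (by simpa [arg_ofReal_of_nonneg hr.le] using ⟨neg_pi_lt_arg x, arg_le_pi x⟩) s

lemma one_add_ne_zero_of_norm_lt_one {h : ℂ} (hh : ‖h‖ < 1) : 1 + h ≠ 0 := by
  intro h0
  rw [show h = -1 by linear_combination h0, norm_neg, norm_one] at hh
  exact hh.false

lemma norm_one_add_cpow_sub_one_le {h s : ℂ} (hh : ‖h‖ ≤ 1 / 2) (hsh : ‖s‖ * ‖h‖ ≤ 2 / 3) :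
    ‖(1 + h) ^ s - 1‖ ≤ 3 * ‖s‖ * ‖h‖ := by
  have hlog : ‖log (1 + h) * s‖ ≤ 3 / 2 * ‖h‖ * ‖s‖ := by
    rw [norm_mul]
    gcongr
    exact norm_log_one_add_half_le_self hh
  rw [cpow_def_of_ne_zero (one_add_ne_zero_of_norm_lt_one (by linarith))]
  calc ‖exp (log (1 + h) * s) - 1‖ ≤ 2 * ‖log (1 + h) * s‖ := norm_exp_sub_one_le (by linarith)
    _ ≤ 3 * ‖s‖ * ‖h‖ := by linarith

lemma abs_arg_one_add_le_pi_div_six {h : ℂ} (hh : ‖h‖ ≤ 1 / 3) : |arg (1 + h)| ≤ π / 6 := by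
  have hre : 0 ≤ (1 + h).re := by
    have := neg_abs_le h.re
    have := abs_re_le_norm h
    simp only [add_re, one_re]
    linarith
  have hnorm : 2 / 3 ≤ ‖1 + h‖ := by
    have := norm_sub_norm_le (1 : ℂ) (-h)
    rw [norm_one, norm_neg, sub_neg_eq_add] at this
    linarith
  have hratio : |(1 + h).im / ‖1 + h‖| ≤ 1 / 2 := by
    rw [abs_div, abs_norm, div_le_iff₀ (by linarith)]
    have := abs_im_le_norm h
    simp only [add_im, one_im, zero_add]
    linarith
  have harcsin : Real.arcsin (1 / 2) = π / 6 := by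
    rw [← Real.sin_pi_div_six, Real.arcsin_sin] <;> linarith [Real.pi_pos]
  rw [arg_of_re_nonneg hre, abs_le, ← harcsin, ← Real.arcsin_neg]
  obtain ⟨hlo, hhi⟩ := abs_le.mp hratio
  exact ⟨Real.arcsin_le_arcsin hlo, Real.arcsin_le_arcsin hhi⟩

lemma norm_exp_sub_quadratic_le {x : ℂ} (hx : ‖x‖ ≤ 1) :
    ‖exp x - (1 + x + x ^ 2 / 2)‖ ≤ 2 / 9 * ‖x‖ ^ 3 := by
  have := exp_bound hx (n := 3) (by norm_num)
  norm_num [Finset.sum_range_succ, Nat.factorial] at this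
  linarith

lemma norm_mul_sin_abs_arg_s2 (w : ℂ) : ‖w‖ * Real.sin |arg w| = |w.im| := by
  rw [← Real.abs_sin_eq_sin_abs_of_abs_le_pi (abs_arg_le_pi w), sin_arg, abs_div, abs_norm]
  rcases eq_or_ne w 0 with rfl | hw
  · simp
  · field_simp

end Complex

section Dset

variable {τ θ : ℝ} {z : ℂ}

lemma abs_arg_le_of_mem_Dset (hz : z ∈ Dset τ θ) : |z.arg| ≤ θ :=
  hz.2.elim (fun h ↦ h.1.le) (fun h ↦ h.2)

lemma abs_im_le_of_mem_Dset (hτ : 0 < τ) (hz : z ∈ Dset τ θ) : |z.im| ≤ π / τ := by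
  rcases hz.2 with ⟨_, him⟩ | ⟨hnorm, _⟩
  · exact him
  · calc |z.im| ≤ ‖z‖ := abs_im_le_norm z
      _ ≤ 1 / τ := hnorm
      _ ≤ π / τ := by gcongr; linarith [Real.pi_gt_three]

lemma ofReal_mul_mem_Dset_one (hτ : 0 < τ) (hz : z ∈ Dset τ θ) : (τ : ℂ) * z ∈ Dset 1 θ := by
  have hnorm : ‖(τ : ℂ) * z‖ = τ * ‖z‖ := by rw [norm_mul, norm_real, Real.norm_of_nonneg hτ.le]
  refine ⟨mul_ne_zero (ofReal_ne_zero.mpr hτ.ne') hz.1, ?_⟩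
  rw [arg_real_mul z hτ, im_ofReal_mul, abs_mul, abs_of_pos hτ, hnorm, div_one, div_one]
  rcases hz.2 with ⟨harg, him⟩ | ⟨hle, harg⟩
  · exact Or.inl ⟨harg, by rwa [← le_div_iff₀' hτ]⟩
  · exact Or.inr ⟨by rwa [← le_div_iff₀' hτ], harg⟩

lemma norm_le_two_pi_of_mem_Dset_one (hθ₁ : π / 2 ≤ θ) (hθ₂ : θ ≤ 5 * π / 6)
    (hz : z ∈ Dset 1 θ) : ‖z‖ ≤ 2 * π := by
  rcases hz.2 with ⟨harg, him⟩ | ⟨hle, _⟩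
  · have hsin : 1 / 2 ≤ Real.sin θ := by
      rw [← Real.sin_pi_sub, ← Real.sin_pi_div_six]
      exact Real.sin_le_sin_of_le_of_le_pi_div_two (by linarith [Real.pi_pos]) (by linarith)
        (by linarith)
    have := norm_mul_sin_abs_arg_s2 z
    rw [harg] at this
    rw [div_one] at him
    nlinarith [norm_nonneg z]
  · linarith [Real.pi_gt_three]

lemma neg_log_three_notMem_Dset_one (hθ : θ < π) : -(Real.log 3 : ℂ) ∉ Dset 1 θ := by
  have hlog : 1 < Real.log 3 := by linarith [Real.log_three_gt_d9]
  rintro ⟨-, ⟨harg, -⟩ | ⟨hle, -⟩⟩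
  · rw [← ofReal_neg, arg_ofReal_of_neg (by linarith), abs_of_pos Real.pi_pos] at harg
    exact hθ.ne' harg
  · rw [norm_neg, norm_real, Real.norm_of_nonneg (by linarith), div_one] at hle
    linarith

end Dset

noncomputable def bdf2Exp (w : ℂ) : ℂ := bdf2 1 (exp (-w))

lemma bdf2_exp_neg_mul (τ : ℝ) (z : ℂ) :
    bdf2 τ (exp (-z * τ)) = (τ : ℂ)⁻¹ * bdf2Exp (τ * z) := by
  simp only [bdf2Exp, bdf2, ofReal_one, inv_one, one_mul, neg_mul, mul_comm z]

lemma bdf2Exp_eq_mul (w : ℂ) : bdf2Exp w = (exp (-w) - 1) * (exp (-w) - 3) / 2 := by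
  simp only [bdf2Exp, bdf2, ofReal_one, inv_one, one_mul]
  ring

lemma norm_bdf2Exp_le (w : ℂ) : ‖bdf2Exp w‖ ≤ (Real.exp ‖w‖ + 2) ^ 2 := by
  have hexp : ‖exp (-w)‖ ≤ Real.exp ‖w‖ := by
    rw [norm_exp, neg_re, Real.exp_le_exp]
    exact (neg_le_abs _).trans (abs_re_le_norm w)
  have h1 := norm_sub_le (exp (-w)) 1
  have h3 := norm_sub_le (exp (-w)) 3
  rw [norm_one] at h1
  rw [show ‖(3 : ℂ)‖ = 3 by norm_num] at h3
  rw [bdf2Exp_eq_mul, norm_div, norm_mul, show ‖(2 : ℂ)‖ = 2 by norm_num]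
  have := norm_nonneg (exp (-w) - 1)
  have := norm_nonneg (exp (-w) - 3)
  nlinarith [norm_nonneg (exp (-w))]

lemma norm_bdf2Exp_sub_self_le {w : ℂ} (hw : ‖w‖ ≤ 1 / 2) :
    ‖bdf2Exp w - w‖ ≤ 4 / 3 * ‖w‖ ^ 3 := by
  have h1 := norm_exp_sub_quadratic_le (x := -w) (by rw [norm_neg]; linarith)
  have h2 := norm_exp_sub_quadratic_le (x := -2 * w) (by rw [norm_mul]; norm_num; linarith)
  rw [norm_neg] at h1
  rw [norm_mul, show ‖(-2 : ℂ)‖ = 2 by norm_num] at h2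
  have hid : bdf2Exp w - w = -2 * (exp (-w) - (1 + -w + (-w) ^ 2 / 2)) +
      1 / 2 * (exp (-2 * w) - (1 + -2 * w + (-2 * w) ^ 2 / 2)) := by
    rw [show -2 * w = -w + -w by ring, exp_add]
    simp only [bdf2Exp, bdf2, ofReal_one, inv_one, one_mul]
    ring
  rw [hid]
  refine (norm_add_le _ _).trans ?_
  rw [norm_mul, norm_mul, show ‖(-2 : ℂ)‖ = 2 by norm_num, show ‖(1 / 2 : ℂ)‖ = 1 / 2 by norm_num]
  nlinarith

lemma eq_neg_ofReal_of_exp_neg_eq {w : ℂ} {c : ℝ} (h : exp (-w) = exp c) (him : |w.im| ≤ π) :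
    w = -c := by
  obtain ⟨n, hn⟩ := exp_eq_exp_iff_exists_int.mp h
  have hn0 : n = 0 := by
    have hwim : w.im = -(n * (2 * π)) := by
      have := congrArg im hn
      simp only [neg_im, add_im, ofReal_im, mul_im, intCast_re, mul_re, re_ofNat, ofReal_re, im_ofNat,
        mul_zero, sub_zero, I_im, mul_one, zero_mul, add_zero, I_re, intCast_im, sub_self,
        zero_add] at this
      linarith
    by_contra hne
    have : (1 : ℝ) ≤ |(n : ℝ)| := by exact_mod_cast Int.one_le_abs hne
    rw [hwim, abs_neg, abs_mul, abs_of_pos Real.two_pi_pos] at him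
    nlinarith [Real.pi_pos]
  rw [hn0, Int.cast_zero, zero_mul, add_zero] at hn
  linear_combination -hn

lemma eq_zero_or_eq_neg_log_three_of_bdf2Exp_eq_zero {w : ℂ} (h : bdf2Exp w = 0)
    (him : |w.im| ≤ π) : w = 0 ∨ w = -(Real.log 3 : ℂ) := by
  rw [bdf2Exp_eq_mul, div_eq_zero_iff, mul_eq_zero, sub_eq_zero, sub_eq_zero] at h
  rcases h with (h1 | h3) | h2
  · left
    simpa using eq_neg_ofReal_of_exp_neg_eq (c := 0) (by simpa using h1) him
  · right
    refine eq_neg_ofReal_of_exp_neg_eq ?_ him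
    rw [← ofReal_exp, Real.exp_log (by norm_num), h3]
    norm_num
  · norm_num at h2

lemma bdf2Exp_ne_zero_of_mem_Dset_one {θ : ℝ} (hθ : θ < π) {w : ℂ} (hw : w ∈ Dset 1 θ) :
    bdf2Exp w ≠ 0 := by
  intro h
  rcases eq_zero_or_eq_neg_log_three_of_bdf2Exp_eq_zero h
      (by simpa using abs_im_le_of_mem_Dset one_pos hw) with rfl | rfl
  · exact hw.1 rfl
  · exact neg_log_three_notMem_Dset_one hθ hw

section Estimates

variable {α : ℝ} {w : ℂ}

lemma norm_bdf2Exp_cpow_sub_cpow_le_of_norm_le_half (hα₀ : 0 ≤ α) (hα₂ : α ≤ 2) (hw₀ : w ≠ 0)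
    (hw : ‖w‖ ≤ 1 / 2) (harg : |arg w| < 5 * π / 6) :
    ‖bdf2Exp w ^ (α : ℂ) - w ^ (α : ℂ)‖ ≤ 8 * ‖w‖ ^ (2 + α) := by
  set h := (bdf2Exp w - w) / w
  have hpos : 0 < ‖w‖ := norm_pos_iff.mpr hw₀
  have hF : bdf2Exp w = w * (1 + h) := by simp only [h, mul_add, mul_one, mul_div_cancel₀ _ hw₀]; ring
  have hh : ‖h‖ ≤ 4 / 3 * ‖w‖ ^ 2 := by
    rw [norm_div, div_le_iff₀ hpos]
    linarith [norm_bdf2Exp_sub_self_le hw]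
  have hh₃ : ‖h‖ ≤ 1 / 3 := by nlinarith
  have hsplit : bdf2Exp w ^ (α : ℂ) = w ^ (α : ℂ) * (1 + h) ^ (α : ℂ) := by
    obtain ⟨hlo, hhi⟩ := abs_le.mp (abs_arg_one_add_le_pi_div_six hh₃)
    obtain ⟨hlo', hhi'⟩ := abs_lt.mp harg
    rw [hF]
    exact mul_cpow_of_arg_add_mem hw₀ (one_add_ne_zero_of_norm_lt_one (by linarith))
      ⟨by linarith, by linarith⟩ _
  have hnormα : ‖(α : ℂ)‖ = α := by rw [norm_real, Real.norm_of_nonneg hα₀]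
  have hpow := norm_one_add_cpow_sub_one_le (h := h) (s := α) (by linarith)
    (by rw [hnormα]; nlinarith [norm_nonneg h])
  rw [hnormα] at hpow
  calc ‖bdf2Exp w ^ (α : ℂ) - w ^ (α : ℂ)‖ = ‖w‖ ^ α * ‖(1 + h) ^ (α : ℂ) - 1‖ := by
        rw [hsplit, ← mul_sub_one, norm_mul, norm_cpow_real]
    _ ≤ ‖w‖ ^ α * (3 * α * (4 / 3 * ‖w‖ ^ 2)) := by gcongr; exact hpow.trans (by gcongr)
    _ ≤ 8 * ‖w‖ ^ (2 + α) := by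
        rw [Real.rpow_add hpos, Real.rpow_two]
        have := mul_pos (pow_pos hpos 2) (Real.rpow_pos_of_pos hpos α)
        nlinarith

lemma norm_bdf2Exp_cpow_sub_cpow_le_of_half_lt {R : ℝ} (hα₀ : 0 ≤ α) (hα₂ : α ≤ 2)
    (hw : 1 / 2 < ‖w‖) (hR : ‖w‖ ≤ R) :
    ‖bdf2Exp w ^ (α : ℂ) - w ^ (α : ℂ)‖ ≤ (16 * (Real.exp R + 2) ^ 4 + 4) * ‖w‖ ^ (2 + α) := by
  have hpos : 0 < ‖w‖ := by linarith
  have hM : 1 ≤ (Real.exp R + 2) ^ 2 := one_le_pow₀ (by linarith [Real.exp_pos R])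
  have hF : ‖bdf2Exp w‖ ^ α ≤ (Real.exp R + 2) ^ 4 :=
    calc ‖bdf2Exp w‖ ^ α ≤ ((Real.exp R + 2) ^ 2) ^ α := by
          gcongr
          exact (norm_bdf2Exp_le w).trans (by gcongr)
      _ ≤ ((Real.exp R + 2) ^ 2) ^ (2 : ℝ) := Real.rpow_le_rpow_of_exponent_le hM hα₂
      _ = (Real.exp R + 2) ^ 4 := by rw [Real.rpow_two]; ring
  have hsplit : ‖w‖ ^ (2 + α) = ‖w‖ ^ 2 * ‖w‖ ^ α := by rw [Real.rpow_add hpos, Real.rpow_two]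
  have hwα : (1 / 2 : ℝ) ^ (2 : ℝ) ≤ ‖w‖ ^ α :=
    calc (1 / 2 : ℝ) ^ (2 : ℝ) ≤ (1 / 2 : ℝ) ^ α :=
          Real.rpow_le_rpow_of_exponent_ge (by norm_num) (by norm_num) hα₂
      _ ≤ ‖w‖ ^ α := by gcongr
  rw [Real.rpow_two] at hwα
  calc ‖bdf2Exp w ^ (α : ℂ) - w ^ (α : ℂ)‖ ≤ ‖bdf2Exp w‖ ^ α + ‖w‖ ^ α := by
        rw [← norm_cpow_real, ← norm_cpow_real]; exact norm_sub_le _ _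
    _ ≤ (16 * (Real.exp R + 2) ^ 4 + 4) * ‖w‖ ^ (2 + α) := by
        have hw₂ : 1 / 4 ≤ ‖w‖ ^ 2 := by nlinarith
        have hlow : 1 / 16 ≤ ‖w‖ ^ (2 + α) := by rw [hsplit]; nlinarith
        have hwα₄ : ‖w‖ ^ α ≤ 4 * ‖w‖ ^ (2 + α) := by rw [hsplit]; nlinarith
        have := mul_le_mul_of_nonneg_left hlow (by positivity : 0 ≤ 16 * (Real.exp R + 2) ^ 4)
        linarith

lemma norm_bdf2Exp_cpow_sub_cpow_le_of_mem_Dset_one {θ : ℝ} (hα₀ : 0 ≤ α) (hα₂ : α ≤ 2)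
    (hθ₁ : π / 2 ≤ θ) (hθ₂ : θ < 5 * π / 6) (hw : w ∈ Dset 1 θ) :
    ‖bdf2Exp w ^ (α : ℂ) - w ^ (α : ℂ)‖ ≤
      (16 * (Real.exp (2 * π) + 2) ^ 4 + 4) * ‖w‖ ^ (2 + α) := by
  rcases le_or_gt ‖w‖ (1 / 2) with hsmall | hlarge
  · refine (norm_bdf2Exp_cpow_sub_cpow_le_of_norm_le_half hα₀ hα₂ hw.1 hsmall
      ((abs_arg_le_of_mem_Dset hw).trans_lt hθ₂)).trans ?_
    have : 1 ≤ (Real.exp (2 * π) + 2) ^ 4 := one_le_pow₀ (by linarith [Real.exp_pos (2 * π)])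
    gcongr
    linarith
  · exact norm_bdf2Exp_cpow_sub_cpow_le_of_half_lt hα₀ hα₂ hlarge
      (norm_le_two_pi_of_mem_Dset_one hθ₁ hθ₂.le hw)

end Estimates

lemma norm_inv_mul_cpow_sub_cpow_le {τ α C : ℝ} (hτ : 0 < τ) {u z : ℂ} (hu : u ≠ 0) (hz : z ≠ 0)
    (h : ‖u ^ (α : ℂ) - ((τ : ℂ) * z) ^ (α : ℂ)‖ ≤ C * ‖(τ : ℂ) * z‖ ^ (2 + α)) :
    ‖((τ : ℂ)⁻¹ * u) ^ (α : ℂ) - z ^ (α : ℂ)‖ ≤ C * τ ^ 2 * ‖z‖ ^ (2 + α) := by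
  have hτ' : (0 : ℝ) < τ⁻¹ := inv_pos.mpr hτ
  have hz' : z = ((τ⁻¹ : ℝ) : ℂ) * ((τ : ℂ) * z) := by
    rw [← mul_assoc, ← ofReal_mul, inv_mul_cancel₀ hτ.ne', ofReal_one, one_mul]
  rw [← ofReal_inv, ofReal_mul_cpow hτ' hu, hz', ofReal_mul_cpow hτ' (by simpa [hτ.ne'] using hz),
    ← mul_sub, ← hz', norm_mul, norm_cpow_real, norm_real, Real.norm_of_nonneg hτ'.le]
  calc τ⁻¹ ^ α * ‖u ^ (α : ℂ) - ((τ : ℂ) * z) ^ (α : ℂ)‖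
      ≤ τ⁻¹ ^ α * (C * ‖(τ : ℂ) * z‖ ^ (2 + α)) := by gcongr
    _ = C * τ ^ 2 * ‖z‖ ^ (2 + α) := by
        rw [norm_mul, norm_real, Real.norm_of_nonneg hτ.le, Real.mul_rpow hτ.le (norm_nonneg z),
          Real.rpow_add hτ, Real.rpow_two, Real.inv_rpow hτ.le]
        field_simp [(Real.rpow_pos_of_pos hτ α).ne']

theorem bdf2_symbol_fractional_power_consistency (α : ℝ) (hα : α ∈ Ioo (1 : ℝ) 2) :
    ∃ θ₀ ∈ Ioo (Real.pi / 2) Real.pi, ∀ θ ∈ Ioo (Real.pi / 2) θ₀,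
      ∃ c > (0 : ℝ),
        ∀ τ : ℝ, 0 < τ → ∀ z ∈ Dset τ θ,
          bdf2 τ (Complex.exp (-z * τ)) ≠ 0 ∧
          ‖(bdf2 τ (Complex.exp (-z * τ))) ^ (α : ℂ) - z ^ (α : ℂ)‖ ≤
            c * τ ^ 2 * ‖z‖ ^ (2 + α) := by
  refine ⟨5 * π / 6, ⟨by linarith [Real.pi_pos], by linarith [Real.pi_pos]⟩, fun θ hθ ↦ ?_⟩
  refine ⟨16 * (Real.exp (2 * π) + 2) ^ 4 + 4, by positivity, fun τ hτ z hz ↦ ?_⟩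
  have hw := ofReal_mul_mem_Dset_one hτ hz
  have hF := bdf2Exp_ne_zero_of_mem_Dset_one (by linarith [hθ.2, Real.pi_pos]) hw
  rw [bdf2_exp_neg_mul]
  exact ⟨mul_ne_zero (inv_ne_zero (ofReal_ne_zero.mpr hτ.ne')) hF,
    norm_inv_mul_cpow_sub_cpow_le hτ hF hz.1 <|
      norm_bdf2Exp_cpow_sub_cpow_le_of_mem_Dset_one (by linarith [hα.1]) hα.2.le hθ.1.le hθ.2 hw⟩
end

section
/- For every ε > 0 there exists θ_ε ∈ (π/2, π) such that for every θ ∈ (π/2, θ_ε), every time step τ > 0 and every z ∈ D(τ,θ), the value δ_τ(e^{−zτ}) lies in the sector Σ_{π/2+ε}, i.e. δ_τ(e^{−zτ}) ≠ 0 and |arg δ_τ(e^{−zτ})| < π/2 + ε, where δ_τ is the BDF2 generating symbol. -/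
/-!
Put `w = zτ` and `ξ = e^{-w}`. Then `2τ δ_τ(ξ) = p(ξ) := (1 - ξ)(3 - ξ)`, so it suffices to place
`p(ξ)` in the sector, which follows from `Re p + tan ε · |Im p| > 0`. Points of `D(τ,θ)` have
`|Im w| ≤ π`, and `-Re w ≤ η |Im w|` once `θ ≤ π/2 + arctan η`.

If `Re w ≥ 0` then `|ξ| ≤ 1`, so `Re p(ξ) = 2(1 - Re ξ)² + 1 - |ξ|² ≥ 0`, and `p(ξ) ≠ 0` since
`ξ ≠ 1`. If `Re w < 0` then `ξ` is an outward perturbation of size `O(η |v|)` of `e^{-iv}`,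
`v = Im w`, at which `Re p = 2(1 - cos v)²`. For `|v| ≤ π/2` the loss is absorbed by
`tan ε · |Im p| ≥ tan ε · |sin v| ≥ (2/π) tan ε · |v|`, and for `|v| > π/2` by `2(1 - cos v)² ≥ 2`.
-/

open Complex Set

open scoped Real

theorem Complex.ne_zero_and_abs_arg_lt_of_re_add_tan_mul_pos {f : ℂ} {ε : ℝ} (hε₀ : 0 < ε)
    (hε : ε < π / 2) (h : 0 < f.re + Real.tan ε * |f.im|) : f ≠ 0 ∧ |f.arg| < π / 2 + ε := by
  have hf : f ≠ 0 := by rintro rfl; simp at h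
  have hsin : 0 < Real.sin ε := Real.sin_pos_of_pos_of_lt_pi hε₀ (by linarith [Real.pi_pos])
  have hcos : 0 < Real.cos ε := Real.cos_pos_of_mem_Ioo ⟨by linarith, hε⟩
  have hnorm : 0 < ‖f‖ := norm_pos_iff.mpr hf
  have hrot : 0 < f.re * Real.cos ε + |f.im| * Real.sin ε := by
    rw [Real.tan_eq_sin_div_cos] at h
    have := mul_pos h hcos
    field_simp at this
    linarith
  have hre : -(Real.sin ε * ‖f‖) < f.re := by
    by_contra! hle
    have hsq : f.re ^ 2 + |f.im| ^ 2 = ‖f‖ ^ 2 := by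
      rw [sq_abs, Complex.sq_norm, normSq_apply]; ring
    have hre_sq : (Real.sin ε * ‖f‖) ^ 2 ≤ f.re ^ 2 := by
      rw [← neg_sq f.re]; exact pow_le_pow_left₀ (by positivity) (by linarith) 2
    have him : |f.im| ≤ Real.cos ε * ‖f‖ := by
      apply (abs_le_of_sq_le_sq' _ (by positivity)).2
      nlinarith [Real.sin_sq_add_cos_sq ε]
    nlinarith [abs_nonneg f.im]
  refine ⟨hf, lt_of_not_ge fun hge => ?_⟩
  have : Real.cos |f.arg| ≤ Real.cos (ε + π / 2) :=
    Real.cos_le_cos_of_nonneg_of_le_pi (by positivity) (abs_arg_le_pi f) (by linarith)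
  rw [Real.cos_abs, cos_arg hf, Real.cos_add_pi_div_two, div_le_iff₀ hnorm] at this
  linarith

theorem Complex.re_add_mul_abs_im_pos_of_re_nonneg {f : ℂ} {c : ℝ} (hf : f ≠ 0) (hre : 0 ≤ f.re)
    (hc : 0 < c) : 0 < f.re + c * |f.im| := by
  rcases hre.lt_or_eq with hre | hre
  · positivity
  · have him : f.im ≠ 0 := fun him => hf (ext hre.symm him)
    rw [← hre, zero_add]
    positivity

theorem Complex.neg_re_le_mul_abs_im_of_abs_arg_le {z : ℂ} {η : ℝ} (hη : 0 ≤ η)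
    (h : |z.arg| ≤ π / 2 + Real.arctan η) : -z.re ≤ η * |z.im| := by
  rcases le_or_gt 0 z.re with hre | hre
  · nlinarith [abs_nonneg z.im]
  obtain ⟨α, hα_def⟩ : ∃ α, |z.arg| = α + π / 2 := ⟨|z.arg| - π / 2, by ring⟩
  have hα₀ : 0 ≤ α := by
    have := mt abs_arg_le_pi_div_two_iff.mp hre.not_ge
    linarith
  have hα : α < π / 2 := by linarith [Real.arctan_lt_pi_div_two η]
  have hcos : 0 < Real.cos α := Real.cos_pos_of_mem_Ioo ⟨by linarith, hα⟩
  have hsin : Real.sin α ≤ η * Real.cos α := by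
    have htan : Real.tan α ≤ η := by
      rw [← Real.arctan_le_arctan_iff, Real.arctan_tan (by linarith) hα]
      linarith
    rwa [Real.tan_eq_sin_div_cos, div_le_iff₀ hcos] at htan
  have hre' : -z.re = ‖z‖ * Real.sin α := by
    rw [← norm_mul_cos_arg, ← Real.cos_abs, hα_def, Real.cos_add_pi_div_two]
    ring
  have him : |z.im| = ‖z‖ * Real.cos α := by
    rw [← norm_mul_sin_arg, abs_mul, abs_norm,
      Real.abs_sin_eq_sin_abs_of_abs_le_pi (abs_arg_le_pi z), hα_def, Real.sin_add_pi_div_two]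
  rw [hre', him]
  nlinarith [norm_nonneg z]

theorem Complex.exp_neg_ne_one {w : ℂ} (hw : w ≠ 0) (him : |w.im| ≤ π) : exp (-w) ≠ 1 := by
  rw [Ne, exp_eq_one_iff]
  rintro ⟨n, hn⟩
  have hre : w.re = 0 := by simpa using congrArg re hn
  have him' : -w.im = n * (2 * π) := by simpa using congrArg im hn
  have hn0 : n = 0 := by
    rw [← abs_neg, him', abs_mul, abs_of_pos (by positivity : (0 : ℝ) < 2 * π)] at him
    have : ((|n| : ℤ) : ℝ) < 1 := by push_cast; nlinarith [Real.pi_pos]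
    exact Int.abs_lt_one_iff.1 (by exact_mod_cast this)
  exact hw (ext hre (by simpa [hn0] using him'))

theorem mul_abs_lt_sq_one_sub_cos_add_mul_abs_sin {c η v : ℝ} (hc : 0 < c) (hηc : η ≤ c / 16)
    (hη : η ≤ 1 / 16) (hv₀ : v ≠ 0) (hv : |v| ≤ π) :
    8 * η * |v| < 2 * (1 - Real.cos v) ^ 2 + c * |Real.sin v| := by
  have hv₀' : 0 < |v| := abs_pos.2 hv₀
  rcases le_or_gt |v| (π / 2) with hv₂ | hv₂
  · have hsin := Real.mul_abs_le_abs_sin hv₂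
    have hπ : 1 / 2 < 2 / π := by
      rw [lt_div_iff₀ Real.pi_pos]; linarith [Real.pi_lt_four]
    have : c / 2 * |v| < c * |Real.sin v| := by
      calc c / 2 * |v| = c * (1 / 2 * |v|) := by ring
        _ < c * (2 / π * |v|) := by gcongr
        _ ≤ c * |Real.sin v| := by gcongr
    nlinarith [sq_nonneg (1 - Real.cos v)]
  · have hcos : Real.cos v ≤ 0 := by
      rw [← Real.cos_abs]
      exact Real.cos_nonpos_of_pi_div_two_le_of_le hv₂.le (by linarith [Real.pi_pos])
    nlinarith [abs_nonneg (Real.sin v), Real.pi_lt_four]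

def bdf2Poly (ξ : ℂ) : ℂ := (1 - ξ) * (3 - ξ)

theorem bdf2_eq_ofReal_mul_bdf2Poly (τ : ℝ) (ξ : ℂ) :
    bdf2 τ ξ = ((2 * τ)⁻¹ : ℝ) * bdf2Poly ξ := by
  rw [bdf2, bdf2Poly]
  push_cast
  ring

theorem re_bdf2Poly (ξ : ℂ) : (bdf2Poly ξ).re = (1 - ξ.re) * (3 - ξ.re) - ξ.im ^ 2 := by
  simp only [bdf2Poly, mul_re, sub_re, one_re, re_ofNat, sub_im, one_im, im_ofNat]
  ring

theorem im_bdf2Poly (ξ : ℂ) : (bdf2Poly ξ).im = -(2 * ξ.im * (2 - ξ.re)) := by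
  simp only [bdf2Poly, mul_im, sub_re, one_re, sub_im, one_im, re_ofNat, im_ofNat]
  ring

theorem bdf2Poly_ne_zero_of_norm_le_one {ξ : ℂ} (h : ‖ξ‖ ≤ 1) (h1 : ξ ≠ 1) : bdf2Poly ξ ≠ 0 := by
  refine mul_ne_zero (sub_ne_zero.2 (Ne.symm h1)) (sub_ne_zero.2 fun h3 => ?_)
  rw [← h3] at h
  norm_num at h

theorem re_bdf2Poly_nonneg_of_norm_le_one {ξ : ℂ} (h : ‖ξ‖ ≤ 1) : 0 ≤ (bdf2Poly ξ).re := by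
  have hsq : ξ.re ^ 2 + ξ.im ^ 2 ≤ 1 := by
    have := pow_le_one₀ (norm_nonneg ξ) h (n := 2)
    rwa [Complex.sq_norm, normSq_apply, ← sq, ← sq] at this
  rw [re_bdf2Poly]
  nlinarith [sq_nonneg (1 - ξ.re)]

section Polar

variable {ξ : ℂ} {ρ s t : ℝ}

theorem le_re_bdf2Poly_of_one_le (hre : ξ.re = ρ * s) (him : ξ.im = -(ρ * t))
    (hst : s ^ 2 + t ^ 2 = 1) (hρ₁ : 1 ≤ ρ) (hρ₂ : ρ ≤ 3 / 2) :
    2 * (1 - s) ^ 2 - 4 * (ρ - 1) ≤ (bdf2Poly ξ).re := by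
  have hfactor : (bdf2Poly ξ).re - (2 * (1 - s) ^ 2 - 4 * (ρ - 1))
      = (ρ - 1) * (2 * (ρ + 1) * s ^ 2 - 4 * s + 3 - ρ) := by
    have : t ^ 2 = 1 - s ^ 2 := by linarith
    rw [re_bdf2Poly, hre, him, neg_sq, mul_pow, this]
    ring
  have : 0 ≤ 2 * (ρ + 1) * s ^ 2 - 4 * s + 3 - ρ := by
    nlinarith [sq_nonneg ((ρ + 1) * s - 1), sq_nonneg s]
  nlinarith [mul_nonneg (sub_nonneg.2 hρ₁) this]

theorem abs_le_abs_im_bdf2Poly_of_one_le (hre : ξ.re = ρ * s) (him : ξ.im = -(ρ * t))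
    (hs : s ≤ 1) (hρ₁ : 1 ≤ ρ) (hρ₂ : ρ ≤ 3 / 2) : |t| ≤ |(bdf2Poly ξ).im| := by
  have h2 : 1 / 2 ≤ 2 - ρ * s := by nlinarith
  rw [im_bdf2Poly, hre, him, abs_neg, abs_mul, abs_mul, abs_neg, abs_mul,
    abs_of_pos (by linarith : (0 : ℝ) < 2 - ρ * s), abs_of_pos (by linarith : (0 : ℝ) < ρ), abs_two]
  nlinarith [abs_nonneg t, mul_nonneg (abs_nonneg t) (sub_nonneg.2 hρ₁)]

end Polar

section Sector

variable {w : ℂ} {c η : ℝ}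

theorem re_add_mul_abs_im_bdf2Poly_exp_neg_pos_of_re_neg (hc : 0 < c) (hηc : η ≤ c / 16)
    (hη : η ≤ 1 / 16) (hre : w.re < 0) (hw : -w.re ≤ η * |w.im|) (him : |w.im| ≤ π) :
    0 < (bdf2Poly (exp (-w))).re + c * |(bdf2Poly (exp (-w))).im| := by
  set ρ := Real.exp (-w.re)
  have hξre : (exp (-w)).re = ρ * Real.cos w.im := by simp [exp_re, ρ]
  have hξim : (exp (-w)).im = -(ρ * Real.sin w.im) := by simp [exp_im, ρ]
  have hv₀ : w.im ≠ 0 := by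
    rintro h
    rw [h, abs_zero, mul_zero] at hw
    linarith
  have hρ₁ : 1 ≤ ρ := Real.one_le_exp (by linarith)
  have hρ : ρ - 1 ≤ 2 * (η * |w.im|) := by
    have hsmall : |-w.re| ≤ 1 := by
      rw [abs_of_pos (by linarith)]
      nlinarith [Real.pi_lt_four, abs_nonneg w.im]
    have := (abs_le.1 (Real.abs_exp_sub_one_le hsmall)).2
    rw [abs_of_pos (by linarith)] at this
    linarith
  have hρ₂ : ρ ≤ 3 / 2 := by nlinarith [Real.pi_lt_four, abs_nonneg w.im]
  have hre_bound := le_re_bdf2Poly_of_one_le hξre hξim (Real.cos_sq_add_sin_sq w.im) hρ₁ hρ₂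
  have him_bound := abs_le_abs_im_bdf2Poly_of_one_le hξre hξim (Real.cos_le_one w.im) hρ₁ hρ₂
  have key := mul_abs_lt_sq_one_sub_cos_add_mul_abs_sin hc hηc hη hv₀ him
  nlinarith [mul_le_mul_of_nonneg_left him_bound hc.le]

theorem re_add_mul_abs_im_bdf2Poly_exp_neg_pos (hc : 0 < c) (hηc : η ≤ c / 16)
    (hη : η ≤ 1 / 16) (hw₀ : w ≠ 0) (hw : -w.re ≤ η * |w.im|) (him : |w.im| ≤ π) :
    0 < (bdf2Poly (exp (-w))).re + c * |(bdf2Poly (exp (-w))).im| := by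
  rcases le_or_gt 0 w.re with hre | hre
  · have hξ : ‖exp (-w)‖ ≤ 1 := by
      rw [norm_exp, Real.exp_le_one_iff, neg_re]
      linarith
    exact re_add_mul_abs_im_pos_of_re_nonneg
      (bdf2Poly_ne_zero_of_norm_le_one hξ (exp_neg_ne_one hw₀ him))
      (re_bdf2Poly_nonneg_of_norm_le_one hξ) hc
  · exact re_add_mul_abs_im_bdf2Poly_exp_neg_pos_of_re_neg hc hηc hη hre hw him

end Sector

theorem abs_im_le_and_abs_arg_le_of_mem_Dset {τ θ : ℝ} {z : ℂ} (hτ : 0 < τ)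
    (hz : z ∈ Dset τ θ) : |z.im| ≤ π / τ ∧ |z.arg| ≤ θ := by
  rcases hz.2 with ⟨harg, him⟩ | ⟨hnorm, harg⟩
  · exact ⟨him, harg.le⟩
  · refine ⟨(abs_im_le_norm z).trans (hnorm.trans ?_), harg⟩
    gcongr
    linarith [Real.pi_gt_three]

theorem bdf2_symbol_sector :
    ∀ ε > (0 : ℝ), ∃ θε ∈ Ioo (Real.pi / 2) Real.pi, ∀ θ ∈ Ioo (Real.pi / 2) θε,
      ∀ τ : ℝ, 0 < τ → ∀ z ∈ Dset τ θ,
        bdf2 τ (Complex.exp (-z * τ)) ≠ 0 ∧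
        |(bdf2 τ (Complex.exp (-z * τ))).arg| < Real.pi / 2 + ε := by
  intro ε hε
  set ε' := min ε 1
  have hε'₀ : 0 < ε' := lt_min hε one_pos
  have hε' : ε' < π / 2 := (min_le_right _ _).trans_lt (by linarith [Real.pi_gt_three])
  set c := Real.tan ε'
  have hc : 0 < c := Real.tan_pos_of_pos_of_lt_pi_div_two hε'₀ hε'
  set η := min (c / 16) (1 / 16)
  have hη : 0 < η := by positivity
  refine ⟨π / 2 + Real.arctan η, ⟨by linarith [Real.arctan_pos.2 hη],
    by linarith [Real.arctan_lt_pi_div_two η]⟩, ?_⟩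
  rintro θ ⟨-, hθ⟩ τ hτ z hz
  obtain ⟨him, harg⟩ := abs_im_le_and_abs_arg_le_of_mem_Dset hτ hz
  have hw₀ : z * τ ≠ 0 := mul_ne_zero hz.1 (ofReal_ne_zero.2 hτ.ne')
  have hwim : |(z * τ).im| ≤ π := by
    rw [mul_comm, im_ofReal_mul, abs_mul, abs_of_pos hτ]
    exact (le_div_iff₀' hτ).1 him
  have hwre : -(z * τ).re ≤ η * |(z * τ).im| :=
    neg_re_le_mul_abs_im_of_abs_arg_le hη.le (by rw [arg_mul_real hτ]; linarith)
  obtain ⟨hp₀, hp⟩ := ne_zero_and_abs_arg_lt_of_re_add_tan_mul_pos hε'₀ hε'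
    (re_add_mul_abs_im_bdf2Poly_exp_neg_pos hc (min_le_left _ _) (min_le_right _ _) hw₀ hwre hwim)
  rw [neg_mul, bdf2_eq_ofReal_mul_bdf2Poly, arg_real_mul _ (by positivity)]
  exact ⟨mul_ne_zero (ofReal_ne_zero.2 (by positivity)) hp₀,
    hp.trans_le (by linarith [min_le_left ε 1])⟩
end

section
/- There exists θ₀ ∈ (π/2, π) such that for every θ ∈ (π/2, θ₀) there is a constant c > 0, independent of τ and z, with the property: for every time step τ > 0 and every z ∈ D(τ,θ) one has |ρ₁(e^{−zτ}) τ² − z^{−2}| ≤ c τ², where ρ₁(ξ) = ξ/(1−ξ)². -/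
open Complex Set

/-- Closed form of the generating function `Σ_{n≥1} n ξⁿ`. -/
noncomputable def rho1 (ξ : ℂ) : ℂ := ξ / (1 - ξ) ^ 2

/-!
With `w = zτ` the error is `τ² (ρ₁(e^{-w}) - w⁻²)`, and `ρ₁(e^{-w}) = 1 / (4 sinh²(w/2))`.
Near `w = 0` the third-order Taylor bound `|sinh v - v| ≤ |v|³` shows that the two
double poles cancel, so the bracket is bounded there. Elsewhere on `D(τ,θ)` the point `w`
ranges over a compact set with `|Im w| ≤ π`, which contains no other zero `2πik` of
`1 - e^{-w}`, so the bracket is continuous and hence bounded there as well. The compact set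
depends on `θ` only through `|w| ≤ π / sin θ`, so any `θ₀ < π` will do.
-/

lemma rho1_exp_neg_mul_sq_sub_cpow (z : ℂ) {τ : ℂ} (hτ : τ ≠ 0) :
    rho1 (exp (-z * τ)) * τ ^ 2 - z ^ (-2 : ℂ) =
      τ ^ 2 * (rho1 (exp (-(z * τ))) - ((z * τ) ^ 2)⁻¹) := by
  rw [cpow_neg, cpow_ofNat, neg_mul, mul_sub, mul_pow, mul_inv, mul_left_comm,
    mul_inv_cancel₀ (pow_ne_zero 2 hτ), mul_one, mul_comm]

lemma rho1_exp_neg (w : ℂ) : rho1 (exp (-w)) = (4 * sinh (w / 2) ^ 2)⁻¹ := by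
  have hsplit : 1 - exp (-w) = exp (-(w / 2)) * (2 * sinh (w / 2)) := by
    rw [two_sinh, mul_sub, ← exp_add, ← exp_add, neg_add_cancel, exp_zero]
    ring_nf
  have hsq : exp (-(w / 2)) ^ 2 = exp (-w) := by rw [← exp_nat_mul]; ring_nf
  rw [rho1, hsplit, mul_pow, mul_pow, hsq]
  field_simp [exp_ne_zero]
  ring

lemma norm_sinh_sub_self_le {v : ℂ} (hv : ‖v‖ ≤ 1) : ‖sinh v - v‖ ≤ ‖v‖ ^ 3 := by
  have htaylor (u : ℂ) (hu : ‖u‖ ≤ 1) : ‖exp u - (1 + u + u ^ 2 / 2)‖ ≤ ‖u‖ ^ 3 * (2 / 9) := by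
    have h := exp_bound hu (n := 3) (by norm_num)
    norm_num [Finset.sum_range_succ, Nat.factorial] at h
    convert h using 3
  have hsum := norm_sub_le_of_le (htaylor v hv) (htaylor (-v) (by rwa [norm_neg]))
  rw [norm_neg] at hsum
  calc ‖sinh v - v‖
      = ‖((exp v - (1 + v + v ^ 2 / 2)) - (exp (-v) - (1 + -v + (-v) ^ 2 / 2))) / 2‖ := by
        rw [sinh]; congr 1; ring
    _ ≤ ‖v‖ ^ 3 := by
        rw [norm_div, Complex.norm_two]
        linarith [pow_nonneg (norm_nonneg v) 3]

lemma norm_inv_sq_sub_inv_sq_le {𝕜 : Type*} [NormedField 𝕜] {a b : 𝕜} (hb0 : b ≠ 0)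
    (hb : ‖b‖ ≤ 1 / 2) (hab : ‖a - b‖ ≤ ‖b‖ ^ 3) : ‖(a ^ 2)⁻¹ - (b ^ 2)⁻¹‖ ≤ 4 := by
  have hr : 0 < ‖b‖ := norm_pos_iff.mpr hb0
  have hab' : ‖a - b‖ ≤ ‖b‖ / 4 := by
    have : ‖b‖ ^ 2 ≤ 1 / 4 := by nlinarith
    nlinarith
  have ha : 3 / 4 * ‖b‖ ≤ ‖a‖ := by linarith [norm_sub_norm_le b a, norm_sub_rev a b]
  have hsum : ‖a + b‖ ≤ 9 / 4 * ‖b‖ := by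
    calc ‖a + b‖ = ‖(a - b) + b + b‖ := by ring_nf
      _ ≤ ‖a - b‖ + ‖b‖ + ‖b‖ := norm_add₃_le
      _ ≤ 9 / 4 * ‖b‖ := by linarith
  have ha0 : a ≠ 0 := norm_pos_iff.mp (by linarith)
  have hdiff : (a ^ 2)⁻¹ - (b ^ 2)⁻¹ = -((a - b) * (a + b)) / (a ^ 2 * b ^ 2) := by
    field_simp
    ring
  rw [hdiff, norm_div, norm_neg, norm_mul, norm_mul, norm_pow, norm_pow,
    div_le_iff₀ (by positivity)]
  have ha2 : (3 / 4 * ‖b‖) ^ 2 ≤ ‖a‖ ^ 2 := pow_le_pow_left₀ (by positivity) ha 2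
  calc ‖a - b‖ * ‖a + b‖ ≤ ‖b‖ ^ 3 * (9 / 4 * ‖b‖) := by gcongr
    _ ≤ 4 * (‖a‖ ^ 2 * ‖b‖ ^ 2) := by nlinarith [pow_pos hr 2]

lemma norm_rho1_exp_neg_sub_inv_sq_le_one {w : ℂ} (hw0 : w ≠ 0) (hw : ‖w‖ ≤ 1) :
    ‖rho1 (exp (-w)) - (w ^ 2)⁻¹‖ ≤ 1 := by
  have hv0 : w / 2 ≠ 0 := div_ne_zero hw0 two_ne_zero
  have hv : ‖w / 2‖ ≤ 1 / 2 := by rw [norm_div, Complex.norm_two]; linarith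
  have hsinh := norm_sinh_sub_self_le (hv.trans (by norm_num))
  have hhalf : rho1 (exp (-w)) - (w ^ 2)⁻¹ = ((sinh (w / 2) ^ 2)⁻¹ - ((w / 2) ^ 2)⁻¹) / 4 := by
    rw [rho1_exp_neg]
    field_simp
    norm_num
  rw [hhalf, norm_div, Complex.norm_ofNat, div_le_one₀ (by norm_num)]
  exact norm_inv_sq_sub_inv_sq_le hv0 hv hsinh

lemma exp_ne_one_of_abs_im_lt {w : ℂ} (hw0 : w ≠ 0) (him : |w.im| < 2 * Real.pi) :
    exp w ≠ 1 := by
  intro h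
  obtain ⟨n, rfl⟩ := exp_eq_one_iff.mp h
  have hn : |n| < 1 := by
    have : |(n : ℝ)| < 1 := by
      rw [← mul_lt_mul_iff_left₀ (by positivity : (0 : ℝ) < 2 * Real.pi)]
      simpa [abs_mul, abs_of_pos Real.pi_pos] using him
    exact_mod_cast this
  simp [Int.abs_lt_one_iff.mp hn] at hw0

lemma exists_bound_rho1_exp_neg_sub_inv_sq (R : ℝ) :
    ∃ C, ∀ w : ℂ, w ≠ 0 → |w.im| ≤ Real.pi → ‖w‖ ≤ R →
      ‖rho1 (exp (-w)) - (w ^ 2)⁻¹‖ ≤ C := by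
  set K := {w : ℂ | 1 ≤ ‖w‖ ∧ ‖w‖ ≤ R ∧ |w.im| ≤ Real.pi}
  have hK : IsCompact K := by
    refine Metric.isCompact_of_isClosed_isBounded ?_ ?_
    · exact (isClosed_le continuous_const continuous_norm).inter
        ((isClosed_le continuous_norm continuous_const).inter
          (isClosed_le (continuous_abs.comp continuous_im) continuous_const))
    · exact (Metric.isBounded_closedBall (x := (0 : ℂ)) (r := R)).subset
        fun w hw => mem_closedBall_zero_iff.mpr hw.2.1
  have hcont : ContinuousOn (fun w => rho1 (exp (-w)) - (w ^ 2)⁻¹) K := by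
    intro w hw
    have hw0 : w ≠ 0 := norm_pos_iff.mp (by linarith [hw.1])
    have hexp : exp (-w) ≠ 1 := exp_ne_one_of_abs_im_lt (neg_ne_zero.mpr hw0)
      (by rw [neg_im, abs_neg]; linarith [hw.2.2, Real.pi_pos])
    have hden : (1 - exp (-w)) ^ 2 ≠ 0 := pow_ne_zero 2 (sub_ne_zero.mpr hexp.symm)
    have hw2 : w ^ 2 ≠ 0 := pow_ne_zero 2 hw0
    unfold rho1
    exact ContinuousAt.continuousWithinAt (by fun_prop (disch := assumption))
  obtain ⟨C, hC⟩ := hK.exists_bound_of_continuousOn hcont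
  refine ⟨max 1 C, fun w hw0 him hR => ?_⟩
  rcases le_total ‖w‖ 1 with hw | hw
  · exact (norm_rho1_exp_neg_sub_inv_sq_le_one hw0 hw).trans (le_max_left _ _)
  · exact (hC w ⟨hw, hR, him⟩).trans (le_max_right _ _)

lemma norm_mul_sin_eq_abs_im_of_abs_arg_eq {w : ℂ} {θ : ℝ} (h : |w.arg| = θ) :
    ‖w‖ * Real.sin θ = |w.im| := by
  rw [← h, ← Real.abs_sin_eq_sin_abs_of_abs_le_pi (abs_arg_le_pi w), ← norm_mul_sin_arg w,
    abs_mul, abs_norm]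

lemma mul_ofReal_bounds_of_mem_Dset {τ θ : ℝ} (hτ : 0 < τ) (hθ : 0 < Real.sin θ) {z : ℂ}
    (hz : z ∈ Dset τ θ) :
    z * τ ≠ 0 ∧ |(z * τ).im| ≤ Real.pi ∧ ‖z * τ‖ ≤ Real.pi / Real.sin θ := by
  obtain ⟨hz0, hcases⟩ := hz
  have hw0 : z * τ ≠ 0 := mul_ne_zero hz0 (ofReal_ne_zero.mpr hτ.ne')
  have hnormw : ‖z * τ‖ = ‖z‖ * τ := by rw [norm_mul, norm_real, Real.norm_of_nonneg hτ.le]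
  have himw : |(z * τ).im| = |z.im| * τ := by
    rw [im_mul_ofReal, abs_mul, abs_of_pos hτ]
  rcases hcases with ⟨harg, him⟩ | ⟨hnorm, -⟩
  · have himw_le : |(z * τ).im| ≤ Real.pi := by
      rwa [himw, ← le_div_iff₀ hτ]
    refine ⟨hw0, himw_le, ?_⟩
    rw [le_div_iff₀ hθ, norm_mul_sin_eq_abs_im_of_abs_arg_eq (by rwa [arg_mul_real hτ])]
    exact himw_le
  · have hw : ‖z * τ‖ ≤ 1 := by rwa [hnormw, ← le_div_iff₀ hτ]
    refine ⟨hw0, ?_, ?_⟩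
    · linarith [abs_im_le_norm (z * τ), Real.pi_gt_three]
    · rw [le_div_iff₀ hθ]
      nlinarith [Real.sin_le_one θ, Real.pi_gt_three]

theorem rho1_consistency :
    ∃ θ₀ ∈ Ioo (Real.pi / 2) Real.pi, ∀ θ ∈ Ioo (Real.pi / 2) θ₀,
      ∃ c > (0 : ℝ),
        ∀ τ : ℝ, 0 < τ → ∀ z ∈ Dset τ θ,
          ‖rho1 (Complex.exp (-z * τ)) * (τ : ℂ) ^ 2 - z ^ (-2 : ℂ)‖ ≤
            c * τ ^ 2 := by
  have hπ := Real.pi_pos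
  refine ⟨3 * Real.pi / 4, ⟨by linarith, by linarith⟩, fun θ hθ => ?_⟩
  have hsin : 0 < Real.sin θ :=
    Real.sin_pos_of_pos_of_lt_pi (by linarith [hθ.1]) (by linarith [hθ.2])
  obtain ⟨C, hC⟩ := exists_bound_rho1_exp_neg_sub_inv_sq (Real.pi / Real.sin θ)
  refine ⟨max C 1, by positivity, fun τ hτ z hz => ?_⟩
  obtain ⟨hw0, him, hnorm⟩ := mul_ofReal_bounds_of_mem_Dset hτ hsin hz
  rw [rho1_exp_neg_mul_sq_sub_cpow z (ofReal_ne_zero.mpr hτ.ne'), norm_mul, norm_pow, norm_real,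
    Real.norm_of_nonneg hτ.le, mul_comm]
  gcongr
  exact (hC _ hw0 him hnorm).trans (le_max_left _ _)
end

section
/- There exists θ₀ ∈ (π/2, π) such that for every θ ∈ (π/2, θ₀) there is a constant c > 0, independent of τ and z, with the property: for every time step τ > 0 and every z ∈ D(τ,θ) one has |(ρ₂(e^{−zτ})/2) τ³ − z^{−3}| ≤ c τ³, where ρ₂(ξ) = ξ(1+ξ)/(1−ξ)³. -/
open Complex Set

/-- Closed form of the generating function `Σ_{n≥1} n² ξⁿ`. -/
noncomputable def rho2 (ξ : ℂ) : ℂ := ξ * (1 + ξ) / (1 - ξ) ^ 3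

/-!
Put `w = zτ`. The error equals `τ³ g(w)` with `g(w) = ρ₂(e^{-w})/2 - w^{-3}`, and for
`z ∈ D(τ,θ)` we have `0 < |w| ≤ π / sin θ`, which is `< 2π` once `θ < 5π/6`.
Since `ρ₂(e^{-w}) = Σ n² e^{-nw}` is the second derivative of `1/(e^w - 1) = Σ e^{-nw}` and
`2w^{-3}` that of `1/w`, `2g` is the second derivative of `1/(e^w - 1) - 1/w`. This function is
holomorphic on `|w| < 2π`: the poles at `0` cancel and the next zeros of `e^w - 1` are `±2πi`.
So `g` is bounded on every closed disc of radius `< 2π`.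
-/

open Metric Filter Topology
open scoped Real

lemma exp_ne_one_of_mem_ball {w : ℂ} (hw : w ∈ ball (0 : ℂ) (2 * π)) (hw0 : w ≠ 0) :
    exp w ≠ 1 := by
  rw [Ne, exp_eq_one_iff]
  rintro ⟨n, rfl⟩
  have hn : n ≠ 0 := by rintro rfl; simp at hw0
  have h1 : (1 : ℝ) ≤ |(n : ℝ)| := by exact_mod_cast Int.one_le_abs hn
  rw [mem_ball_zero_iff, norm_mul, norm_mul, norm_mul] at hw
  simp [abs_of_pos Real.pi_pos] at hw
  nlinarith [Real.pi_pos]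

lemma dslope_exp_ne_zero {w : ℂ} (hw : w ∈ ball (0 : ℂ) (2 * π)) : dslope exp 0 w ≠ 0 := by
  rcases eq_or_ne w 0 with rfl | hw0
  · simp [dslope_same]
  · rw [dslope_of_ne _ hw0, slope_def_field, sub_zero, exp_zero]
    exact div_ne_zero (sub_ne_zero.mpr (exp_ne_one_of_mem_ball hw hw0)) hw0

/-- The function `1/(e^w - 1) - 1/w` with its removable singularity at `0` filled in: with
`E = dslope exp 0`, i.e. `E w = (e^w - 1)/w`, it equals `-((E w - 1)/w) / E w`. -/
noncomputable def invExpSubOneRegular (w : ℂ) : ℂ :=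
  -dslope (dslope exp 0) 0 w / dslope exp 0 w

lemma invExpSubOneRegular_eq {w : ℂ} (hw0 : w ≠ 0) (hw : exp w ≠ 1) :
    invExpSubOneRegular w = (exp w - 1)⁻¹ - w⁻¹ := by
  have h1 : exp w - 1 ≠ 0 := sub_ne_zero.mpr hw
  simp only [invExpSubOneRegular, dslope_of_ne _ hw0, slope_def_field, dslope_same,
    Complex.deriv_exp, sub_zero, exp_zero]
  field_simp
  ring

lemma differentiableOn_invExpSubOneRegular :
    DifferentiableOn ℂ invExpSubOneRegular (ball 0 (2 * π)) := by
  have hE : Differentiable ℂ (dslope exp 0) := by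
    rw [← differentiableOn_univ, differentiableOn_dslope univ_mem, differentiableOn_univ]
    exact differentiable_exp
  have hE' : Differentiable ℂ (dslope (dslope exp 0) 0) := by
    rw [← differentiableOn_univ, differentiableOn_dslope univ_mem, differentiableOn_univ]
    exact hE
  exact hE'.neg.differentiableOn.div hE.differentiableOn fun w hw => dslope_exp_ne_zero hw

lemma isOpen_setOf_ne_zero_and_exp_ne_one : IsOpen {w : ℂ | w ≠ 0 ∧ exp w ≠ 1} :=
  isOpen_ne.inter (isOpen_ne_fun continuous_exp continuous_const)

lemma hasDerivAt_invExpSubOneRegular {w : ℂ} (hw0 : w ≠ 0) (hw : exp w ≠ 1) :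
    HasDerivAt invExpSubOneRegular ((w ^ 2)⁻¹ - exp w / (exp w - 1) ^ 2) w := by
  have heq : invExpSubOneRegular =ᶠ[𝓝 w] fun v => (exp v - 1)⁻¹ - v⁻¹ :=
    eventually_of_mem (isOpen_setOf_ne_zero_and_exp_ne_one.mem_nhds ⟨hw0, hw⟩)
      fun _ hv => invExpSubOneRegular_eq hv.1 hv.2
  refine HasDerivAt.congr_of_eventuallyEq ?_ heq
  convert ((hasDerivAt_exp w).sub_const 1).fun_inv (sub_ne_zero.mpr hw) |>.fun_sub
    (hasDerivAt_inv hw0) using 1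
  ring

lemma hasDerivAt_deriv_invExpSubOneRegular {w : ℂ} (hw0 : w ≠ 0) (hw : exp w ≠ 1) :
    HasDerivAt (deriv invExpSubOneRegular) (rho2 (exp (-w)) - 2 * (w ^ 3)⁻¹) w := by
  have heq : deriv invExpSubOneRegular =ᶠ[𝓝 w]
      fun v => (v ^ 2)⁻¹ - exp v / (exp v - 1) ^ 2 :=
    eventually_of_mem (isOpen_setOf_ne_zero_and_exp_ne_one.mem_nhds ⟨hw0, hw⟩)
      fun _ hv => (hasDerivAt_invExpSubOneRegular hv.1 hv.2).deriv
  refine HasDerivAt.congr_of_eventuallyEq ?_ heq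
  have h1 : exp w - 1 ≠ 0 := sub_ne_zero.mpr hw
  have h2 : 1 - (exp w)⁻¹ ≠ 0 := by
    rw [sub_ne_zero, ne_comm, inv_ne_one]
    exact hw
  convert ((hasDerivAt_pow 2 w).fun_inv (pow_ne_zero 2 hw0)).fun_sub
    ((hasDerivAt_exp w).fun_div (((hasDerivAt_exp w).sub_const 1).fun_pow 2) (pow_ne_zero 2 h1))
    using 1
  rw [rho2, exp_neg]
  field_simp
  ring

lemma exists_bound_rho2_exp_neg_sub_inv_pow_three {R : ℝ} (hR : R < 2 * π) :
    ∃ M, ∀ w : ℂ, w ≠ 0 → ‖w‖ ≤ R → ‖rho2 (exp (-w)) / 2 - (w ^ 3)⁻¹‖ ≤ M := by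
  have hcont : ContinuousOn (deriv (deriv invExpSubOneRegular)) (closedBall 0 R) :=
    ((differentiableOn_invExpSubOneRegular.deriv isOpen_ball).deriv
      isOpen_ball).continuousOn.mono (closedBall_subset_ball hR)
  obtain ⟨M, hM⟩ := (isCompact_closedBall 0 R).exists_bound_of_continuousOn hcont
  refine ⟨M / 2, fun w hw0 hwR => ?_⟩
  rw [← mem_closedBall_zero_iff] at hwR
  have hw : exp w ≠ 1 := exp_ne_one_of_mem_ball (closedBall_subset_ball hR hwR) hw0
  have hMw := hM w hwR
  rw [(hasDerivAt_deriv_invExpSubOneRegular hw0 hw).deriv] at hMw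
  calc ‖rho2 (exp (-w)) / 2 - (w ^ 3)⁻¹‖ = ‖rho2 (exp (-w)) - 2 * (w ^ 3)⁻¹‖ / 2 := by
        rw [← RCLike.norm_ofNat (K := ℂ) 2, ← norm_div, sub_div, mul_div_cancel_left₀ _ two_ne_zero]
    _ ≤ M / 2 := by gcongr

lemma norm_mul_ofReal_le_of_mem_Dset {τ θ : ℝ} (hτ : 0 < τ) (hθ : θ ∈ Ioo 0 π) {z : ℂ}
    (hz : z ∈ Dset τ θ) : ‖z * τ‖ ≤ π / Real.sin θ := by
  have hsin : 0 < Real.sin θ := Real.sin_pos_of_pos_of_lt_pi hθ.1 hθ.2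
  rw [norm_mul, norm_real, Real.norm_of_nonneg hτ.le, le_div_iff₀ hsin]
  rcases hz.2 with ⟨harg, him⟩ | ⟨hnorm, -⟩
  · have him_eq : |z.im| = ‖z‖ * Real.sin θ := by
      rw [← div_mul_cancel₀ z.im (norm_ne_zero_iff.mpr hz.1), ← sin_arg, abs_mul, abs_norm,
        mul_comm]
      rcases abs_eq hθ.1.le |>.mp harg with h | h <;> simp [h, abs_of_pos hsin]
    calc ‖z‖ * τ * Real.sin θ = |z.im| * τ := by rw [him_eq]; ring
      _ ≤ π / τ * τ := by gcongr
      _ = π := div_mul_cancel₀ _ hτ.ne'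
  · calc ‖z‖ * τ * Real.sin θ ≤ 1 / τ * τ * 1 := by gcongr; exact Real.sin_le_one θ
      _ ≤ π := by rw [div_mul_cancel₀ _ hτ.ne']; linarith [Real.pi_gt_three]

lemma rho2_exp_neg_mul_div_two_mul_pow_three_sub_cpow {z τ : ℂ} (hτ : τ ≠ 0) :
    rho2 (exp (-z * τ)) / 2 * τ ^ 3 - z ^ (-3 : ℂ)
      = (rho2 (exp (-(z * τ))) / 2 - ((z * τ) ^ 3)⁻¹) * τ ^ 3 := by
  rw [cpow_neg, cpow_ofNat, neg_mul, mul_pow, mul_inv, sub_mul,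
    inv_mul_cancel_right₀ (pow_ne_zero 3 hτ)]

lemma one_half_lt_sin_of_mem_Ioo {θ : ℝ} (hθ : θ ∈ Ioo (π / 2) (5 * π / 6)) :
    1 / 2 < Real.sin θ := by
  rw [← Real.sin_pi_sub, ← Real.sin_pi_div_six]
  exact Real.sin_lt_sin_of_lt_of_le_pi_div_two (by linarith [Real.pi_pos]) (by linarith [hθ.1])
    (by linarith [hθ.2])

theorem rho2_consistency :
    ∃ θ₀ ∈ Ioo (Real.pi / 2) Real.pi, ∀ θ ∈ Ioo (Real.pi / 2) θ₀,
      ∃ c > (0 : ℝ),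
        ∀ τ : ℝ, 0 < τ → ∀ z ∈ Dset τ θ,
          ‖(rho2 (Complex.exp (-z * τ)) / 2) * (τ : ℂ) ^ 3 - z ^ (-3 : ℂ)‖ ≤
            c * τ ^ 3 := by
  refine ⟨5 * π / 6, ⟨by linarith [Real.pi_pos], by linarith [Real.pi_pos]⟩, fun θ hθ => ?_⟩
  have hsin := one_half_lt_sin_of_mem_Ioo hθ
  have hθ' : θ ∈ Ioo 0 π := ⟨by linarith [hθ.1, Real.pi_pos], by linarith [hθ.2, Real.pi_pos]⟩
  have hR : π / Real.sin θ < 2 * π := by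
    rw [div_lt_iff₀ (by linarith)]
    nlinarith [Real.pi_pos]
  obtain ⟨M, hM⟩ := exists_bound_rho2_exp_neg_sub_inv_pow_three hR
  refine ⟨max M 1, by positivity, fun τ hτ z hz => ?_⟩
  have hτ0 : (τ : ℂ) ≠ 0 := ofReal_ne_zero.mpr hτ.ne'
  rw [rho2_exp_neg_mul_div_two_mul_pow_three_sub_cpow hτ0, norm_mul, norm_pow, norm_real,
    Real.norm_of_nonneg hτ.le]
  gcongr
  exact (hM _ (mul_ne_zero hz.1 hτ0) (norm_mul_ofReal_le_of_mem_Dset hτ hθ' hz)).trans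
    (le_max_left M 1)
end
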